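/- There exist reals r_1, …, r_11 ∈ [0,1] such that for every r* ∈ [0,1], min_{1 ≤ i ≤ 11} B(r_i, r*) ≤ 1.5406. -/
import Mathlib
set_option maxHeartbeats 2000000


/-- The PH3 bound function `B(r_L, r*)`:
`B(r_L, r*) = 3/2 + min{1/(4r*), 3/(6r*+2)}·(r* − r_L)` if `r* ≥ r_L`, and
`B(r_L, r*) = 3/2 + min{3/(4r*), 9/(6r*+2)}·(r_L − r*)` if `r* < r_L`, where the minima are
written out piecewise: the first equals `3/(6r*+2)` for `r* ≤ 1/3` and `1/(4r*)` for
`r* ≥ 1/3`, the second equals `9/(6r*+2)` for `r* ≤ 1/3` and `3/(4r*)` for `r* ≥ 1/3`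
(in particular, for `r* = 0` both minima are taken as the second expression). -/
noncomputable def Bfun (rL rs : ℝ) : ℝ :=
  if rL ≤ rs then
    3/2 + (if rs ≤ 1/3 then 3/(6*rs + 2) else 1/(4*rs)) * (rs - rL)
  else
    3/2 + (if rs ≤ 1/3 then 9/(6*rs + 2) else 3/(4*rs)) * (rL - rs)

private lemma key_aux {c d t : ℝ} (hd : 0 < d) (h : c * t ≤ 406/10000 * d) :
    3/2 + c / d * t ≤ 1.5406 := by
  have h2 : c / d * t ≤ 406/10000 := by
    rw [div_mul_eq_mul_div, div_le_iff₀ hd]; linarith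
  norm_num at h2 ⊢
  linarith

private lemma Bfun_le {v : ℝ} (rs a b : ℝ) (ha : a ≤ rs) (hb : rs ≤ b) (h0 : 0 ≤ rs)
    (c1 : ∀ p : ℝ, a ≤ p → p ≤ b → v ≤ p → p ≤ 1/3 → 3*(p - v) ≤ 406/10000*(6*p+2))
    (c2 : ∀ p : ℝ, a ≤ p → p ≤ b → v ≤ p → 1/3 ≤ p → (p - v) ≤ 406/10000*(4*p))
    (c3 : ∀ p : ℝ, a ≤ p → p ≤ b → p ≤ v → p ≤ 1/3 → 9*(v - p) ≤ 406/10000*(6*p+2))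
    (c4 : ∀ p : ℝ, a ≤ p → p ≤ b → p ≤ v → 1/3 ≤ p → 3*(v - p) ≤ 406/10000*(4*p)) :
    Bfun v rs ≤ 1.5406 := by
  unfold Bfun
  split_ifs with h1 h2 h2
  · exact key_aux (by linarith) (c1 rs ha hb h1 h2)
  · push_neg at h2
    exact key_aux (by linarith) (by have := c2 rs ha hb h1 h2.le; linarith)
  · push_neg at h1
    exact key_aux (by linarith) (by have := c3 rs ha hb h1.le h2; linarith)
  · push_neg at h1 h2
    exact key_aux (by linarith) (by have := c4 rs ha hb h1.le h2.le; linarith)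

/-- There exist parameters r_1, …, r_11 ∈ [0,1] such that for every r* ∈ [0,1] the best of
the corresponding 11 parallel copies of PH3 has bound at most 1.5406. -/
theorem kcopy_PH3_bound :
    ∃ r : Fin 11 → ℝ, (∀ i, r i ∈ Set.Icc (0 : ℝ) 1) ∧
      ∀ rs ∈ Set.Icc (0 : ℝ) 1, ∃ i, Bfun (r i) rs ≤ 1.5406 := by
  refine ⟨![45111/5000000, 123409/2500000, 472293/5000000, 724337/5000000, 2012161/10000000, 1321023/5000000, 3346153/10000000, 1052797/2500000, 5299849/10000000, 3334973/5000000, 2098559/2500000], ?_, ?_⟩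
  · intro i
    fin_cases i <;> constructor <;> norm_num
  · rintro rs ⟨h0, h1⟩
    rcases le_or_gt rs (541333/13782000) with hb1 | hc1
    · refine ⟨0, ?_⟩
      show Bfun (45111/5000000) rs ≤ 1.5406
      exact Bfun_le rs (0) (541333/13782000) (by linarith [h0]) hb1 h0 (fun p hpa hpb hv h3 => by linarith) (fun p hpa hpb hv h3 => by linarith) (fun p hpa hpb hv h3 => by linarith) (fun p hpa hpb hv h3 => by linarith)
    rcases le_or_gt rs (573227/6891000) with hb2 | hc2
    · refine ⟨1, ?_⟩
      show Bfun (123409/2500000) rs ≤ 1.5406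
      exact Bfun_le rs (541333/13782000) (573227/6891000) (by linarith [hc1.le]) hb2 h0 (fun p hpa hpb hv h3 => by linarith) (fun p hpa hpb hv h3 => by linarith) (fun p hpa hpb hv h3 => by linarith) (fun p hpa hpb hv h3 => by linarith)
    rcases le_or_gt rs (1822879/13782000) with hb3 | hc3
    · refine ⟨2, ?_⟩
      show Bfun (472293/5000000) rs ≤ 1.5406
      exact Bfun_le rs (573227/6891000) (1822879/13782000) (by linarith [hc2.le]) hb3 h0 (fun p hpa hpb hv h3 => by linarith) (fun p hpa hpb hv h3 => by linarith) (fun p hpa hpb hv h3 => by linarith) (fun p hpa hpb hv h3 => by linarith)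
    rcases le_or_gt rs (2579011/13782000) with hb4 | hc4
    · refine ⟨3, ?_⟩
      show Bfun (724337/5000000) rs ≤ 1.5406
      exact Bfun_le rs (1822879/13782000) (2579011/13782000) (by linarith [hc3.le]) hb4 h0 (fun p hpa hpb hv h3 => by linarith) (fun p hpa hpb hv h3 => by linarith) (fun p hpa hpb hv h3 => by linarith) (fun p hpa hpb hv h3 => by linarith)
    rcases le_or_gt rs (6848483/27564000) with hb5 | hc5
    · refine ⟨4, ?_⟩
      show Bfun (2012161/10000000) rs ≤ 1.5406
      exact Bfun_le rs (2579011/13782000) (6848483/27564000) (by linarith [hc4.le]) hb5 h0 (fun p hpa hpb hv h3 => by linarith) (fun p hpa hpb hv h3 => by linarith) (fun p hpa hpb hv h3 => by linarith) (fun p hpa hpb hv h3 => by linarith)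
    rcases le_or_gt rs (4369069/13782000) with hb6 | hc6
    · refine ⟨5, ?_⟩
      show Bfun (1321023/5000000) rs ≤ 1.5406
      exact Bfun_le rs (6848483/27564000) (4369069/13782000) (by linarith [hc5.le]) hb6 h0 (fun p hpa hpb hv h3 => by linarith) (fun p hpa hpb hv h3 => by linarith) (fun p hpa hpb hv h3 => by linarith) (fun p hpa hpb hv h3 => by linarith)
    rcases le_or_gt rs (3346153/8376000) with hb7 | hc7
    · refine ⟨6, ?_⟩
      show Bfun (3346153/10000000) rs ≤ 1.5406
      exact Bfun_le rs (4369069/13782000) (3346153/8376000) (by linarith [hc6.le]) hb7 h0 (fun p hpa hpb hv h3 => by linarith) (fun p hpa hpb hv h3 => by linarith) (fun p hpa hpb hv h3 => by linarith) (fun p hpa hpb hv h3 => by linarith)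
    rcases le_or_gt rs (1052797/2094000) with hb8 | hc8
    · refine ⟨7, ?_⟩
      show Bfun (1052797/2500000) rs ≤ 1.5406
      exact Bfun_le rs (3346153/8376000) (1052797/2094000) (by linarith [hc7.le]) hb8 h0 (fun p hpa hpb hv h3 => by linarith) (fun p hpa hpb hv h3 => by linarith) (fun p hpa hpb hv h3 => by linarith) (fun p hpa hpb hv h3 => by linarith)
    rcases le_or_gt rs (5299849/8376000) with hb9 | hc9
    · refine ⟨8, ?_⟩
      show Bfun (5299849/10000000) rs ≤ 1.5406
      exact Bfun_le rs (1052797/2094000) (5299849/8376000) (by linarith [hc8.le]) hb9 h0 (fun p hpa hpb hv h3 => by linarith) (fun p hpa hpb hv h3 => by linarith) (fun p hpa hpb hv h3 => by linarith) (fun p hpa hpb hv h3 => by linarith)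
    rcases le_or_gt rs (3334973/4188000) with hb10 | hc10
    · refine ⟨9, ?_⟩
      show Bfun (3334973/5000000) rs ≤ 1.5406
      exact Bfun_le rs (5299849/8376000) (3334973/4188000) (by linarith [hc9.le]) hb10 h0 (fun p hpa hpb hv h3 => by linarith) (fun p hpa hpb hv h3 => by linarith) (fun p hpa hpb hv h3 => by linarith) (fun p hpa hpb hv h3 => by linarith)
    refine ⟨10, ?_⟩
    show Bfun (2098559/2500000) rs ≤ 1.5406
    exact Bfun_le rs (3334973/4188000) (1) (by linarith [hc10.le]) h1 h0 (fun p hpa hpb hv h3 => by linarith) (fun p hpa hpb hv h3 => by linarith) (fun p hpa hpb hv h3 => by linarith) (fun p hpa hpb hv h3 => by linarith)
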